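/- Let β ∈ (0,1), 0 < ε < 1, 0 ≤ θ₁ < 1, 0 ≤ θ₂ < 1 and x ∈ ℝ^p. Suppose the sub-sampled Hessian H(x) satisfies λ_min(H(x)) ≥ (1−ε)γ, and let p ∈ ℝ^p satisfy the inexactness conditions ‖H(x)p + ∇F(x)‖ ≤ θ₁‖∇F(x)‖ and pᵀ∇F(x) ≤ −(1−θ₂) pᵀH(x)p. Then: (a) every step size α with 0 < α ≤ 2(1−θ₂)(1−β)(1−ε)/κ satisfies the Armijo condition F(x+αp) ≤ F(x) + αβ pᵀ∇F(x); (b) if θ₁ ≤ √((1−ε)/(4κ̃)), then for any α satisfying the Armijo condition, F(x+αp) − F(x*) ≤ (1 − αβ/κ̃)(F(x) − F(x*)); (c) for general θ₁ < 1, for any α satisfying the Armijo condition, F(x+αp) − F(x*) ≤ (1 − 2(1−θ₂)(1−θ₁)²(1−ε) αβ/κ̃²)(F(x) − F(x*)). -/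

import Mathlib

/-!
Along a line, `t ↦ F (x + t • v) - c t² ‖v‖² / 2` is convex (concave) when `c` is a lower
(upper) bound for the Hessian, which gives quadratic lower and upper Taylor bounds. The upper one
and `-⟪p, ∇F x⟫ ≥ (1 - θ₂) ⟪p, H p⟫ ≥ (1 - θ₂)(1 - ε) γ ‖p‖²` give (a). The lower one gives the
Polyak–Łojasiewicz inequality `2 γ (F x - F x⋆) ≤ ‖∇F x‖²`, so by the Armijo condition (b) and (c)
reduce to lower bounds on `-⟪p, ∇F x⟫` by multiples of `‖∇F x‖²`. Write `H = H(x)` and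
`r = H p + ∇F x`. In (b), `-⟪p, ∇F x⟫ = ⟪H⁻¹ ∇F x, ∇F x⟫ - ⟪H⁻¹ r, ∇F x⟫`, and Cauchy–Schwarz
for the form `⟪H⁻¹ ·, ·⟫` with `‖r‖ ≤ θ₁ ‖∇F x‖` bounds this below by `‖∇F x‖² / (2 K̂)`.
In (c), `(1 - θ₁) ‖∇F x‖ ≤ ‖H p‖` and `‖H p‖² ≤ K̂ ⟪H p, p⟫ ≤ K̂² ‖p‖²`.
-/

open scoped RealInnerProductSpace

/-- The Hessian of `F : ℝ^d → ℝ` at `x`, as a continuous linear map,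
obtained as the (Fréchet) derivative of the gradient. -/
noncomputable def hess {d : ℕ} (F : EuclideanSpace ℝ (Fin d) → ℝ)
    (x : EuclideanSpace ℝ (Fin d)) :
    EuclideanSpace ℝ (Fin d) →L[ℝ] EuclideanSpace ℝ (Fin d) :=
  fderiv ℝ (gradient F) x

open Finset

lemma add_deriv_add_half_le_of_le_deriv2 {φ φ' φ'' : ℝ → ℝ} {c : ℝ}
    (hφ : ∀ t, HasDerivAt φ (φ' t) t) (hφ' : ∀ t, HasDerivAt φ' (φ'' t) t)
    (hc : ∀ t, c ≤ φ'' t) : φ 0 + φ' 0 + c / 2 ≤ φ 1 := by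
  have hψ : ∀ t, HasDerivAt (fun t => φ t - c / 2 * t ^ 2) (φ' t - c * t) t := fun t =>
    ((hφ t).fun_sub (((hasDerivAt_id t).pow 2).const_mul (c / 2))).congr_deriv (by simp; ring)
  have hψ' : ∀ t, HasDerivAt (fun t => φ' t - c * t) (φ'' t - c) t := fun t =>
    ((hφ' t).fun_sub ((hasDerivAt_id t).const_mul c)).congr_deriv (by simp)
  have hconv : ConvexOn ℝ Set.univ (fun t => φ t - c / 2 * t ^ 2) :=
    convexOn_of_hasDerivWithinAt2_nonneg convex_univ
      (fun t _ => (hψ t).continuousAt.continuousWithinAt)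
      (fun t _ => (hψ t).hasDerivWithinAt) (fun t _ => (hψ' t).hasDerivWithinAt)
      (fun t _ => sub_nonneg.2 (hc t))
  have := hconv.le_slope_of_hasDerivAt trivial trivial one_pos (hψ 0)
  simp only [slope_def_field] at this
  norm_num at this
  linarith

lemma hasDerivAt_add_smul {V : Type*} [NormedAddCommGroup V] [NormedSpace ℝ V] (x v : V) (t : ℝ) :
    HasDerivAt (fun t : ℝ => x + t • v) v t := by
  simpa using ((hasDerivAt_id t).smul_const v).const_add x

-- `|2 k C| ≤ 2 k A - X` because `(2 k C)² ≤ 4 k² R A ≤ k X A ≤ (2 k A - X)²`.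
lemma le_two_mul_sub_of_sq_le_mul {k A R C X : ℝ} (hX : 0 ≤ X) (hXA : X ≤ k * A)
    (hRX : 4 * k * R ≤ X) (hC : C ^ 2 ≤ R * A) : X ≤ 2 * k * (A - C) := by
  have hkA : 0 ≤ k * A := hX.trans hXA
  have : (2 * k * C) ^ 2 ≤ (2 * k * A - X) ^ 2 := by
    nlinarith [mul_le_mul_of_nonneg_left hC (sq_nonneg (2 * k)),
      mul_le_mul_of_nonneg_right hRX hkA,
      mul_nonneg (sub_nonneg.2 hXA) (by linarith : 0 ≤ 4 * (k * A) - X)]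
  linarith [(abs_le_of_sq_le_sq' this (by linarith)).2]

lemma sub_le_one_sub_mul_mul_sub_of_le {Φ₀ Φ₁ Φ c κ α β q : ℝ} (hκ : 0 < κ) (hαβ : 0 ≤ α * β)
    (harm : Φ₁ ≤ Φ₀ + α * β * q) (hdec : c * (Φ₀ - Φ) ≤ κ * -q) :
    Φ₁ - Φ ≤ (1 - c * α * β / κ) * (Φ₀ - Φ) := by
  have h : c * (Φ₀ - Φ) / κ ≤ -q := (div_le_iff₀' hκ).2 hdec
  have := mul_le_mul_of_nonneg_left h hαβ
  have e : (1 - c * α * β / κ) * (Φ₀ - Φ) = Φ₀ - Φ - α * β * (c * (Φ₀ - Φ) / κ) := by ring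
  linarith

lemma Finset.sum_le_sum_of_card_eq_of_forall_le {ι M : Type*} [AddCommMonoid M] [LinearOrder M]
    [IsOrderedAddMonoid M] {K : ι → M} {A B : Finset ι} (hcard : #A = #B)
    (hle : ∀ a ∈ A, ∀ b ∈ B, K a ≤ K b) : ∑ i ∈ A, K i ≤ ∑ i ∈ B, K i := by
  rcases B.eq_empty_or_nonempty with rfl | hB
  · simp [card_eq_zero.1 hcard]
  obtain ⟨b₀, hb₀, hmin⟩ := B.exists_min_image K hB
  calc ∑ i ∈ A, K i ≤ #A • K b₀ := sum_le_card_nsmul A K _ fun a ha => hle a ha b₀ hb₀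
    _ = #B • K b₀ := by rw [hcard]
    _ ≤ ∑ i ∈ B, K i := card_nsmul_le_sum B K _ hmin

lemma Finset.sum_le_sum_of_card_eq_of_forall_notMem_le {ι M : Type*} [DecidableEq ι]
    [AddCommMonoid M] [LinearOrder M] [IsOrderedAddMonoid M] {K : ι → M} {T Q : Finset ι}
    (hcard : #T = #Q) (hQ : ∀ i ∈ Q, ∀ j ∉ Q, K j ≤ K i) : ∑ i ∈ T, K i ≤ ∑ i ∈ Q, K i := by
  rw [← sum_inter_add_sum_sdiff T Q, ← sum_inter_add_sum_sdiff Q T, inter_comm]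
  gcongr 1
  exact sum_le_sum_of_card_eq_of_forall_le (card_sdiff_comm hcard)
    fun a ha b hb => hQ b (mem_sdiff.1 hb).1 a (mem_sdiff.1 ha).2

namespace ContinuousLinearMap

variable {E : Type*} [NormedAddCommGroup E] [InnerProductSpace ℝ E] {H : E →L[ℝ] E}

lemma mul_inner_apply_self_le_norm_sq {m : ℝ} (hm : 0 ≤ m) (hlow : ∀ v, m * ‖v‖ ^ 2 ≤ ⟪H v, v⟫)
    (u : E) : m * ⟪H u, u⟫ ≤ ‖H u‖ ^ 2 := by
  have h1 := hlow u
  have h2 := real_inner_le_norm (H u) u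
  nlinarith [sq_nonneg (m * ‖u‖ - ‖H u‖), norm_nonneg u]

namespace IsPositive

lemma inner_sq_le_mul (hH : H.IsPositive) (u w : E) :
    ⟪H u, w⟫ ^ 2 ≤ ⟪H u, u⟫ * ⟪H w, w⟫ := by
  have hquad : ∀ t : ℝ, 0 ≤ ⟪H w, w⟫ * (t * t) + 2 * ⟪H u, w⟫ * t + ⟪H u, u⟫ := fun t => by
    have := hH.inner_nonneg_left (u + t • w)
    simp only [map_add, map_smul, inner_add_left, inner_add_right, real_inner_smul_left,
      real_inner_smul_right, hH.inner_left_eq_inner_right w u, real_inner_comm (H u) w] at this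
    linarith
  have := discrim_le_zero hquad
  rw [discrim] at this
  linarith

lemma norm_apply_sq_le (hH : H.IsPositive) {L : ℝ} (hL : ∀ v, ⟪H v, v⟫ ≤ L * ‖v‖ ^ 2) (u : E) :
    ‖H u‖ ^ 2 ≤ L * ⟪H u, u⟫ := by
  have hCS := hH.inner_sq_le_mul u (H u)
  rw [real_inner_self_eq_norm_sq] at hCS
  have := mul_le_mul_of_nonneg_left (hL (H u)) (hH.inner_nonneg_left u)
  rcases eq_or_ne (H u) 0 with h0 | h0
  · simp [h0]
  · refine le_of_mul_le_mul_right ?_ (by positivity : 0 < ‖H u‖ ^ 2)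
    linarith

lemma mul_one_sub_sq_mul_norm_sq_le (hH : H.IsPositive) {L c θ : ℝ} (hL : 0 ≤ L)
    (hup : ∀ v, ⟪H v, v⟫ ≤ L * ‖v‖ ^ 2) (hθ : θ < 1) (hc : 0 ≤ c) {p g : E}
    (hp : ‖H p + g‖ ≤ θ * ‖g‖) (hdesc : c * ‖p‖ ^ 2 ≤ -⟪p, g⟫) :
    c * (1 - θ) ^ 2 * ‖g‖ ^ 2 ≤ L ^ 2 * -⟪p, g⟫ := by
  have hg : (1 - θ) * ‖g‖ ≤ ‖H p‖ := by
    have := norm_sub_le (H p + g) (H p)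
    rw [add_sub_cancel_left] at this
    linarith
  have hHp : ‖H p‖ ^ 2 ≤ L ^ 2 * ‖p‖ ^ 2 := by
    have := mul_le_mul_of_nonneg_left (hup p) hL
    linarith [hH.norm_apply_sq_le hup p]
  calc c * (1 - θ) ^ 2 * ‖g‖ ^ 2 = c * ((1 - θ) * ‖g‖) ^ 2 := by ring
    _ ≤ c * (L ^ 2 * ‖p‖ ^ 2) :=
      mul_le_mul_of_nonneg_left
        ((pow_le_pow_left₀ (by nlinarith [norm_nonneg g]) hg 2).trans hHp) hc
    _ = L ^ 2 * (c * ‖p‖ ^ 2) := by ring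
    _ ≤ L ^ 2 * -⟪p, g⟫ := mul_le_mul_of_nonneg_left hdesc (sq_nonneg L)

lemma norm_sq_le_two_mul_neg_inner [FiniteDimensional ℝ E] (hH : H.IsPositive) {m L θ : ℝ}
    (hm : 0 < m) (hlow : ∀ v, m * ‖v‖ ^ 2 ≤ ⟪H v, v⟫) (hup : ∀ v, ⟪H v, v⟫ ≤ L * ‖v‖ ^ 2)
    (hθ : 4 * L * θ ^ 2 ≤ m) {p g : E} (hp : ‖H p + g‖ ≤ θ * ‖g‖) :
    ‖g‖ ^ 2 ≤ 2 * L * -⟪p, g⟫ := by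
  rcases eq_or_ne g 0 with rfl | hg
  · simp
  have hmL : m ≤ L := le_of_mul_le_mul_right ((hlow g).trans (hup g)) (by positivity)
  have hinj : Function.Injective H := (injective_iff_map_eq_zero H).2 fun v hv => by
    have := hlow v
    rw [hv, inner_zero_left] at this
    by_contra hv0
    linarith [mul_pos hm (pow_pos (norm_pos_iff.2 hv0) 2)]
  -- `a = H⁻¹ g` and `b = H⁻¹ (H p + g)`; Cauchy–Schwarz for `⟪H ·, ·⟫` controls `⟪H b, a⟫`.
  obtain ⟨a, rfl⟩ := LinearMap.surjective_of_injective (f := (H : E →ₗ[ℝ] E)) hinj g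
  set b := p + a
  change ‖H a‖ ^ 2 ≤ 2 * L * -⟪p, H a⟫
  have hHb : H b = H p + H a := map_add H p a
  have hpa : -⟪p, H a⟫ = ⟪H a, a⟫ - ⟪H b, a⟫ := by
    rw [show p = b - a by simp [b], inner_sub_left, ← hH.inner_left_eq_inner_right,
      ← hH.inner_left_eq_inner_right]
    ring
  have hR : 4 * L * ⟪H b, b⟫ ≤ ‖H a‖ ^ 2 := by
    have h1 : m * ⟪H b, b⟫ ≤ (θ * ‖H a‖) ^ 2 :=
      (mul_inner_apply_self_le_norm_sq hm.le hlow b).trans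
        (pow_le_pow_left₀ (norm_nonneg _) (hHb ▸ hp) 2)
    nlinarith [hH.inner_nonneg_left b, sq_nonneg ‖H a‖]
  rw [hpa]
  exact le_two_mul_sub_of_sq_le_mul (sq_nonneg _) (hH.norm_apply_sq_le hup a) hR
    (hH.inner_sq_le_mul b a)

end IsPositive

end ContinuousLinearMap

section Hessian

variable {d : ℕ} {G : EuclideanSpace ℝ (Fin d) → ℝ}

lemma ContDiff.differentiable_gradient (hG : ContDiff ℝ 2 G) : Differentiable ℝ (gradient G) := by
  have : ContDiff ℝ 1 (fderiv ℝ G) := hG.fderiv_right (by norm_num)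
  exact ((InnerProductSpace.toDual ℝ _).symm.contDiff.comp this).differentiable (by norm_num)

lemma inner_hess_apply (x u w : EuclideanSpace ℝ (Fin d)) :
    ⟪hess G x u, w⟫ = fderiv ℝ (fderiv ℝ G) x u w := by
  have : gradient G = (InnerProductSpace.toDual ℝ _).symm ∘ fderiv ℝ G := rfl
  rw [hess, this, (InnerProductSpace.toDual ℝ _).symm.comp_fderiv]
  exact InnerProductSpace.toDual_symm_apply

lemma ContDiff.inner_hess_comm (hG : ContDiff ℝ 2 G) (x u w : EuclideanSpace ℝ (Fin d)) :
    ⟪hess G x u, w⟫ = ⟪u, hess G x w⟫ := by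
  rw [← real_inner_comm u, inner_hess_apply, inner_hess_apply]
  exact hG.contDiffAt.isSymmSndFDerivAt (by simp) u w

lemma ContDiff.hasDerivAt_comp_add_smul (hG : ContDiff ℝ 2 G) (x v : EuclideanSpace ℝ (Fin d))
    (t : ℝ) :
    HasDerivAt (fun t : ℝ => G (x + t • v)) ⟪gradient G (x + t • v), v⟫ t := by
  rw [inner_gradient_left]
  exact ((hG.differentiable (by norm_num)) _).hasFDerivAt.comp_hasDerivAt t
    (hasDerivAt_add_smul x v t)

lemma ContDiff.hasDerivAt_inner_gradient_add_smul (hG : ContDiff ℝ 2 G)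
    (x v : EuclideanSpace ℝ (Fin d)) (t : ℝ) :
    HasDerivAt (fun t : ℝ => ⟪gradient G (x + t • v), v⟫) ⟪hess G (x + t • v) v, v⟫ t :=
  ((hG.differentiable_gradient _).hasFDerivAt.comp_hasDerivAt t
    (hasDerivAt_add_smul x v t)).inner ℝ (hasDerivAt_const t v) |>.congr_deriv (by simp [hess])

lemma ContDiff.add_inner_gradient_add_le_of_le_hess (hG : ContDiff ℝ 2 G) {c : ℝ}
    (x v : EuclideanSpace ℝ (Fin d)) (hc : ∀ y, c * ‖v‖ ^ 2 ≤ ⟪hess G y v, v⟫) :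
    G x + ⟪gradient G x, v⟫ + c / 2 * ‖v‖ ^ 2 ≤ G (x + v) := by
  have := add_deriv_add_half_le_of_le_deriv2 (fun t => hG.hasDerivAt_comp_add_smul x v t)
    (fun t => hG.hasDerivAt_inner_gradient_add_smul x v t) (fun t => hc (x + t • v))
  simp only [zero_smul, add_zero, one_smul] at this
  linarith

lemma ContDiff.le_add_inner_gradient_add_of_hess_le (hG : ContDiff ℝ 2 G) {c : ℝ}
    (x v : EuclideanSpace ℝ (Fin d)) (hc : ∀ y, ⟪hess G y v, v⟫ ≤ c * ‖v‖ ^ 2) :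
    G (x + v) ≤ G x + ⟪gradient G x, v⟫ + c / 2 * ‖v‖ ^ 2 := by
  have := add_deriv_add_half_le_of_le_deriv2 (fun t => (hG.hasDerivAt_comp_add_smul x v t).fun_neg)
    (fun t => (hG.hasDerivAt_inner_gradient_add_smul x v t).fun_neg) (c := -(c * ‖v‖ ^ 2))
    (fun t => neg_le_neg (hc (x + t • v)))
  simp only [zero_smul, add_zero, one_smul] at this
  linarith

lemma ContDiff.two_mul_sub_le_norm_gradient_sq (hG : ContDiff ℝ 2 G) {γ : ℝ} (hγ : 0 < γ)
    (hlow : ∀ y v, γ * ‖v‖ ^ 2 ≤ ⟪hess G y v, v⟫) (x y : EuclideanSpace ℝ (Fin d)) :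
    2 * γ * (G x - G y) ≤ ‖gradient G x‖ ^ 2 := by
  have hT := hG.add_inner_gradient_add_le_of_le_hess x (y - x) (hlow · _)
  rw [add_sub_cancel] at hT
  have hCS := neg_le_of_abs_le (abs_real_inner_le_norm (gradient G x) (y - x))
  nlinarith [sq_nonneg (γ * ‖y - x‖ - ‖gradient G x‖)]

lemma ContDiff.armijo_of_hess_le (hG : ContDiff ℝ 2 G) {L c α β : ℝ}
    (hL : ∀ y v, ⟪hess G y v, v⟫ ≤ L * ‖v‖ ^ 2) {x p : EuclideanSpace ℝ (Fin d)}
    (hdesc : c * ‖p‖ ^ 2 ≤ -⟪p, gradient G x⟫) (hα : 0 ≤ α) (hβ : β ≤ 1)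
    (hαL : α * L ≤ 2 * (1 - β) * c) :
    G (x + α • p) ≤ G x + α * β * ⟪p, gradient G x⟫ := by
  have hT := hG.le_add_inner_gradient_add_of_hess_le x (α • p) (hL · _)
  rw [real_inner_smul_right, real_inner_comm, norm_smul, mul_pow, Real.norm_eq_abs, sq_abs] at hT
  have h1 : α * (α * L) * ‖p‖ ^ 2 ≤ α * (2 * (1 - β) * c) * ‖p‖ ^ 2 :=
    mul_le_mul_of_nonneg_right (mul_le_mul_of_nonneg_left hαL hα) (sq_nonneg _)
  have h2 : α * (1 - β) * (c * ‖p‖ ^ 2) ≤ α * (1 - β) * -⟪p, gradient G x⟫ :=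
    mul_le_mul_of_nonneg_left hdesc (mul_nonneg hα (by linarith))
  linarith

end Hessian

section Sampling

variable {n s : ℕ}

-- The paper's `K̂`: `K̂_{|S|}` if the indices of `S` are distinct, `K̂₁` otherwise.
def IsKHat (K : Fin n → ℝ) (S : Fin s → Fin n) (Khat : ℝ) : Prop :=
  (Function.Injective S ∧ ∃ Q : Finset (Fin n), Q.card = s ∧
      (∀ i ∈ Q, ∀ j ∉ Q, K j ≤ K i) ∧ Khat = (∑ i ∈ Q, K i) / s) ∨
    (¬ Function.Injective S ∧ (∀ i, K i ≤ Khat) ∧ ∃ i, Khat = K i)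

variable {K : Fin n → ℝ} {S : Fin s → Fin n} {Khat : ℝ}

lemma IsKHat.pos (hK : IsKHat K S Khat) (hs : 0 < s) (hKpos : ∀ i, 0 < K i) : 0 < Khat := by
  rcases hK with ⟨-, Q, hQ, -, rfl⟩ | ⟨-, -, i, rfl⟩
  · exact div_pos (sum_pos (fun i _ => hKpos i) (card_pos.1 (hQ ▸ hs))) (by exact_mod_cast hs)
  · exact hKpos i

lemma IsKHat.sum_le (hK : IsKHat K S Khat) : ∑ j, K (S j) ≤ s * Khat := by
  rcases hK with ⟨hS, Q, hQ, hQtop, rfl⟩ | ⟨-, hle, -⟩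
  · rcases Nat.eq_zero_or_pos s with rfl | hs
    · simp
    rw [mul_div_cancel₀ _ (by positivity), ← sum_image fun a _ b _ hab => hS hab]
    exact sum_le_sum_of_card_eq_of_forall_notMem_le
      (by rw [card_image_of_injective _ hS, card_univ, Fintype.card_fin, hQ]) hQtop
  · simpa using sum_le_sum (s := univ) fun j _ => hle (S j)

end Sampling

section SubsampledHessian

variable {d n s : ℕ}

noncomputable def subsampledHess (f : Fin n → EuclideanSpace ℝ (Fin d) → ℝ) (S : Fin s → Fin n)
    (x : EuclideanSpace ℝ (Fin d)) :
    EuclideanSpace ℝ (Fin d) →L[ℝ] EuclideanSpace ℝ (Fin d) :=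
  (s : ℝ)⁻¹ • ∑ j, hess (f (S j)) x

variable {f : Fin n → EuclideanSpace ℝ (Fin d) → ℝ} {S : Fin s → Fin n}

lemma inner_subsampledHess_apply (x u w : EuclideanSpace ℝ (Fin d)) :
    ⟪subsampledHess f S x u, w⟫ = (s : ℝ)⁻¹ * ∑ j, ⟪hess (f (S j)) x u, w⟫ := by
  simp only [subsampledHess, FunLike.coe_smul, FunLike.coe_sum, Pi.smul_apply, Finset.sum_apply,
    real_inner_smul_left, sum_inner]

lemma isSymmetric_subsampledHess (hf : ∀ i, ContDiff ℝ 2 (f i)) (x : EuclideanSpace ℝ (Fin d)) :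
    (subsampledHess f S x).IsSymmetric := fun u w => by
  simp only [ContinuousLinearMap.coe_coe]
  rw [inner_subsampledHess_apply, real_inner_comm, inner_subsampledHess_apply]
  simp only [(hf _).inner_hess_comm x u, real_inner_comm u]

lemma inner_subsampledHess_le {K : Fin n → ℝ} {Khat : ℝ} (hs : 0 < s)
    (hfK : ∀ i y v, ⟪hess (f i) y v, v⟫ ≤ K i * ‖v‖ ^ 2) (hK : IsKHat K S Khat)
    (x v : EuclideanSpace ℝ (Fin d)) : ⟪subsampledHess f S x v, v⟫ ≤ Khat * ‖v‖ ^ 2 := by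
  rw [inner_subsampledHess_apply]
  calc (s : ℝ)⁻¹ * ∑ j, ⟪hess (f (S j)) x v, v⟫
      ≤ (s : ℝ)⁻¹ * ((∑ j, K (S j)) * ‖v‖ ^ 2) := by
        rw [sum_mul]
        gcongr with j
        exact hfK (S j) x v
    _ ≤ (s : ℝ)⁻¹ * ((s * Khat) * ‖v‖ ^ 2) := by
        gcongr
        exact hK.sum_le
    _ = Khat * ‖v‖ ^ 2 := by field_simp

end SubsampledHessian

theorem stmt_3_general {d n s : ℕ} (hs : 0 < s)
    (f : Fin n → EuclideanSpace ℝ (Fin d) → ℝ) (K : Fin n → ℝ)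
    (F : EuclideanSpace ℝ (Fin d) → ℝ)
    (γ Kc β ε θ₁ θ₂ Khat : ℝ) (x xstar p : EuclideanSpace ℝ (Fin d))
    (S : Fin s → Fin n)
    -- each fᵢ is twice continuously differentiable, convex, with `∇²fᵢ ⪯ Kᵢ I`
    (hf : ∀ i, ContDiff ℝ 2 (f i))
    (hKpos : ∀ i, 0 < K i)
    (hfK : ∀ i y v, ⟪(hess (f i) y) v, v⟫ ≤ K i * ‖v‖ ^ 2)
    -- `F = (1/n) ∑ fᵢ`
    (hF : ∀ y, F y = (1 / n : ℝ) * ∑ i, f i y)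
    -- `γ I ⪯ ∇²F ⪯ K I` with `0 < γ ≤ K`
    (hγ : 0 < γ) (hγK : γ ≤ Kc)
    (hFlow : ∀ y v, γ * ‖v‖ ^ 2 ≤ ⟪(hess F y) v, v⟫)
    (hFup : ∀ y v, ⟪(hess F y) v, v⟫ ≤ Kc * ‖v‖ ^ 2)
    (hβ : 0 < β) (hβ1 : β < 1) (hε1 : ε < 1)
    (hθ₁0 : 0 ≤ θ₁) (hθ₁1 : θ₁ < 1) (hθ₂1 : θ₂ < 1)
    -- `Khat = K̂_{|S|}` if the sample is without replacement (distinct indices),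
    -- `Khat = K̂₁ = max Kᵢ` otherwise
    (hKhat :
      (Function.Injective S ∧ ∃ Q : Finset (Fin n), Q.card = s ∧
          (∀ i ∈ Q, ∀ j ∉ Q, K j ≤ K i) ∧ Khat = (∑ i ∈ Q, K i) / s) ∨
      (¬ Function.Injective S ∧ (∀ i, K i ≤ Khat) ∧ ∃ i, Khat = K i))
    -- `λ_min(H(x)) ≥ (1-ε)γ` for the sub-sampled Hessian `H(x)`
    (hH : ∀ v, (1 - ε) * γ * ‖v‖ ^ 2 ≤
        ⟪((s : ℝ)⁻¹ • ∑ j, hess (f (S j)) x) v, v⟫)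
    -- inexactness conditions on the update direction `p`
    (hp₁ : ‖((s : ℝ)⁻¹ • ∑ j, hess (f (S j)) x) p + gradient F x‖ ≤ θ₁ * ‖gradient F x‖)
    (hp₂ : ⟪p, gradient F x⟫ ≤
        -(1 - θ₂) * ⟪p, ((s : ℝ)⁻¹ • ∑ j, hess (f (S j)) x) p⟫) :
    -- (a) any `0 < α ≤ 2(1-θ₂)(1-β)(1-ε)/κ` satisfies the Armijo condition
    (∀ α : ℝ, 0 < α → α ≤ 2 * (1 - θ₂) * (1 - β) * (1 - ε) / (Kc / γ) →
        F (x + α • p) ≤ F x + α * β * ⟪p, gradient F x⟫) ∧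
    -- (b) if `θ₁ ≤ √((1-ε)/(4 κ̃))`, linear decrease with rate `1 - αβ/κ̃`
    (θ₁ ≤ Real.sqrt ((1 - ε) / (4 * (Khat / γ))) →
      ∀ α : ℝ, 0 < α → F (x + α • p) ≤ F x + α * β * ⟪p, gradient F x⟫ →
        F (x + α • p) - F xstar ≤ (1 - α * β / (Khat / γ)) * (F x - F xstar)) ∧
    -- (c) in general, linear decrease with rate `1 - 2(1-θ₂)(1-θ₁)²(1-ε)αβ/κ̃²`
    (∀ α : ℝ, 0 < α → F (x + α • p) ≤ F x + α * β * ⟪p, gradient F x⟫ →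
        F (x + α • p) - F xstar ≤
          (1 - 2 * (1 - θ₂) * (1 - θ₁) ^ 2 * (1 - ε) * α * β / (Khat / γ) ^ 2) *
            (F x - F xstar)) := by
  change ∀ v, _ ≤ ⟪subsampledHess f S x v, v⟫ at hH
  change ‖subsampledHess f S x p + _‖ ≤ _ at hp₁
  change _ ≤ -(1 - θ₂) * ⟪p, subsampledHess f S x p⟫ at hp₂
  have hFC : ContDiff ℝ 2 F := funext hF ▸ contDiff_const.mul (ContDiff.sum fun i _ => hf i)
  have hm : 0 < (1 - ε) * γ := mul_pos (by linarith) hγ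
  have hKhat_pos : 0 < Khat := IsKHat.pos hKhat hs hKpos
  have hHpos : (subsampledHess f S x).IsPositive := (ContinuousLinearMap.isPositive_iff _).2
    ⟨isSymmetric_subsampledHess hf x, fun v => (mul_nonneg hm.le (sq_nonneg _)).trans (hH v)⟩
  have hHup := inner_subsampledHess_le hs hfK hKhat x
  have hPL := hFC.two_mul_sub_le_norm_gradient_sq hγ hFlow x xstar
  have hdesc : (1 - θ₂) * ((1 - ε) * γ) * ‖p‖ ^ 2 ≤ -⟪p, gradient F x⟫ := by
    have := mul_le_mul_of_nonneg_left (hH p) (sub_nonneg.2 hθ₂1.le)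
    rw [real_inner_comm] at this
    linarith
  refine ⟨fun α hα hαle => ?_, fun hθ α hα harm => ?_, fun α hα harm => ?_⟩
  · refine hFC.armijo_of_hess_le hFup hdesc hα.le hβ1.le ?_
    rw [le_div_iff₀ (div_pos (hγ.trans_le hγK) hγ)] at hαle
    field_simp at hαle
    linarith
  · have hθ' : 4 * Khat * θ₁ ^ 2 ≤ (1 - ε) * γ := by
      have := (Real.le_sqrt hθ₁0 (by positivity)).1 hθ
      rw [le_div_iff₀ (by positivity)] at this
      field_simp at this
      linarith
    have := hHpos.norm_sq_le_two_mul_neg_inner hm hH hHup hθ' hp₁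
    simpa using sub_le_one_sub_mul_mul_sub_of_le (c := 1) (div_pos hKhat_pos hγ) (by positivity)
      harm (by rw [one_mul, div_mul_eq_mul_div, le_div_iff₀ hγ]; linarith)
  · have := hHpos.mul_one_sub_sq_mul_norm_sq_le hKhat_pos.le hHup hθ₁1 (by positivity) hp₁ hdesc
    refine sub_le_one_sub_mul_mul_sub_of_le (by positivity) (by positivity) harm ?_
    rw [div_pow, div_mul_eq_mul_div, le_div_iff₀ (by positivity)]
    have := mul_le_mul_of_nonneg_left hPL
      (by positivity : 0 ≤ (1 - θ₂) * ((1 - ε) * γ) * (1 - θ₁) ^ 2)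
    linarith

theorem stmt_3 {d n s : ℕ} (hn : 0 < n) (hs : 0 < s)
    (f : Fin n → EuclideanSpace ℝ (Fin d) → ℝ) (K : Fin n → ℝ)
    (F : EuclideanSpace ℝ (Fin d) → ℝ)
    (γ Kc β ε θ₁ θ₂ Khat : ℝ) (x xstar p : EuclideanSpace ℝ (Fin d))
    (S : Fin s → Fin n)
    -- each fᵢ is twice continuously differentiable, convex, with `∇²fᵢ ⪯ Kᵢ I`
    (hf : ∀ i, ContDiff ℝ 2 (f i))
    (hKpos : ∀ i, 0 < K i)
    (hfpsd : ∀ i y v, 0 ≤ ⟪(hess (f i) y) v, v⟫)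
    (hfK : ∀ i y v, ⟪(hess (f i) y) v, v⟫ ≤ K i * ‖v‖ ^ 2)
    -- `F = (1/n) ∑ fᵢ`
    (hF : ∀ y, F y = (1 / n : ℝ) * ∑ i, f i y)
    -- `γ I ⪯ ∇²F ⪯ K I` with `0 < γ ≤ K`
    (hγ : 0 < γ) (hγK : γ ≤ Kc)
    (hFlow : ∀ y v, γ * ‖v‖ ^ 2 ≤ ⟪(hess F y) v, v⟫)
    (hFup : ∀ y v, ⟪(hess F y) v, v⟫ ≤ Kc * ‖v‖ ^ 2)
    -- `xstar` is the (unique) minimizer of `F`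
    (hmin : ∀ y, F xstar ≤ F y)
    (hβ : 0 < β) (hβ1 : β < 1) (hε : 0 < ε) (hε1 : ε < 1)
    (hθ₁0 : 0 ≤ θ₁) (hθ₁1 : θ₁ < 1) (hθ₂0 : 0 ≤ θ₂) (hθ₂1 : θ₂ < 1)
    -- `Khat = K̂_{|S|}` if the sample is without replacement (distinct indices),
    -- `Khat = K̂₁ = max Kᵢ` otherwise
    (hKhat :
      (Function.Injective S ∧ ∃ Q : Finset (Fin n), Q.card = s ∧
          (∀ i ∈ Q, ∀ j ∉ Q, K j ≤ K i) ∧ Khat = (∑ i ∈ Q, K i) / s) ∨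
      (¬ Function.Injective S ∧ (∀ i, K i ≤ Khat) ∧ ∃ i, Khat = K i))
    -- `λ_min(H(x)) ≥ (1-ε)γ` for the sub-sampled Hessian `H(x)`
    (hH : ∀ v, (1 - ε) * γ * ‖v‖ ^ 2 ≤
        ⟪((s : ℝ)⁻¹ • ∑ j, hess (f (S j)) x) v, v⟫)
    -- inexactness conditions on the update direction `p`
    (hp₁ : ‖((s : ℝ)⁻¹ • ∑ j, hess (f (S j)) x) p + gradient F x‖ ≤ θ₁ * ‖gradient F x‖)
    (hp₂ : ⟪p, gradient F x⟫ ≤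
        -(1 - θ₂) * ⟪p, ((s : ℝ)⁻¹ • ∑ j, hess (f (S j)) x) p⟫) :
    -- (a) any `0 < α ≤ 2(1-θ₂)(1-β)(1-ε)/κ` satisfies the Armijo condition
    (∀ α : ℝ, 0 < α → α ≤ 2 * (1 - θ₂) * (1 - β) * (1 - ε) / (Kc / γ) →
        F (x + α • p) ≤ F x + α * β * ⟪p, gradient F x⟫) ∧
    -- (b) if `θ₁ ≤ √((1-ε)/(4 κ̃))`, linear decrease with rate `1 - αβ/κ̃`
    (θ₁ ≤ Real.sqrt ((1 - ε) / (4 * (Khat / γ))) →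
      ∀ α : ℝ, 0 < α → F (x + α • p) ≤ F x + α * β * ⟪p, gradient F x⟫ →
        F (x + α • p) - F xstar ≤ (1 - α * β / (Khat / γ)) * (F x - F xstar)) ∧
    -- (c) in general, linear decrease with rate `1 - 2(1-θ₂)(1-θ₁)²(1-ε)αβ/κ̃²`
    (∀ α : ℝ, 0 < α → F (x + α • p) ≤ F x + α * β * ⟪p, gradient F x⟫ →
        F (x + α • p) - F xstar ≤
          (1 - 2 * (1 - θ₂) * (1 - θ₁) ^ 2 * (1 - ε) * α * β / (Khat / γ) ^ 2) *
            (F x - F xstar)) :=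
  stmt_3_general hs f K F γ Kc β ε θ₁ θ₂ Khat x xstar p S hf hKpos hfK hF hγ hγK hFlow hFup hβ hβ1
    hε1 hθ₁0 hθ₁1 hθ₂1 hKhat hH hp₁ hp₂
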